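/- arXiv:1908.04770 — 6 statements merged into one kernel-verified Lean document; each statement's English description precedes it below -/
import Mathlib

section
/- For every positive integer M, the M×M matrix A'_M with entries A'_M(i,j) = binom(3M-i, 2M-j) for 1 ≤ i,j ≤ M has determinant det(A'_M) = ∏_{i=0}^{M-1} i!·(i+2M)! / ((i+M)!)^2; in particular this determinant is strictly positive. -/
/-! Reversing the order of rows and columns turns `A'_M` into the block `binom(2M + i, M + j)`
of Pascal's triangle. In such a block `binom(a + i, b + j)` the entry factors as a row factor
`(a + i)! / (a - b + i)!`, a column factor `1 / (b + j)!`, and the falling factorial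
`(a - b + i)(a - b + i - 1)⋯(a - b + i - j + 1)`, a monic polynomial of degree `j` in the row
variable. The last matrix therefore has the Vandermonde determinant of the nodes `a - b + i`,
namely `∏ i!`. -/

open Finset Matrix Polynomial
open scoped Nat

theorem Nat.factorial_mul_choose_add (n b j : ℕ) :
    (b + j)! * n.choose (b + j) = n.descFactorial b * (n - b).descFactorial j := by
  rw [← Nat.descFactorial_eq_factorial_mul_choose,
    ← Nat.descFactorial_mul_descFactorial (Nat.le_add_right b j), Nat.add_sub_cancel_left,
    mul_comm]

namespace Matrix

variable {R : Type*} [CommRing R]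

theorem det_vandermonde_natCast (n : ℕ) :
    (vandermonde fun i : Fin n ↦ (i : R)).det = ∏ i ∈ range n, (i ! : R) := by
  cases n with
  | zero => simp
  | succ m =>
    rw [det_vandermonde_id_eq_superFactorial, ← Nat.prod_range_succ_factorial, Nat.cast_prod]

theorem det_descPochhammer_eval_natCast_add [IsDomain R] (x : R) (n : ℕ) :
    (of fun i j : Fin n ↦ (descPochhammer R j).eval ((i : R) + x)).det =
      ∏ i ∈ range n, (i ! : R) := by
  rw [← det_eval_matrixOfPolynomials_eq_det_vandermonde _ _ (fun j ↦ descPochhammer_natDegree R j)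
    (fun j ↦ monic_descPochhammer R j), det_vandermonde_add, det_vandermonde_natCast]

theorem det_choose_add_add {K : Type*} [Field K] [CharZero K] {a b : ℕ} (hba : b ≤ a) (n : ℕ) :
    (of fun i j : Fin n ↦ (((a + i).choose (b + j) : ℕ) : K)).det =
      ∏ i ∈ range n, ((a + i).descFactorial b * i ! / (b + i)! : K) := by
  have hentry : ∀ i j : Fin n, (((a + i).choose (b + j) : ℕ) : K) =
      (a + i).descFactorial b * ((b + j)! : K)⁻¹ *
        (descPochhammer K j).eval ((i : K) + (a - b : ℕ)) := by
    intro i j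
    have h := congrArg (Nat.cast (R := K)) (Nat.factorial_mul_choose_add (a + i) b j)
    rw [show a + i - b = a - b + i by omega, Nat.cast_mul, Nat.cast_mul] at h
    rw [show (i : K) + (a - b : ℕ) = (a - b + i : ℕ) by push_cast; ring,
      descPochhammer_eval_eq_descFactorial, mul_right_comm, ← h, mul_comm,
      inv_mul_cancel_left₀ (Nat.cast_ne_zero.mpr (Nat.factorial_ne_zero _))]
  have hfactor : (of fun i j : Fin n ↦ (((a + i).choose (b + j) : ℕ) : K)) =
      of fun i j : Fin n ↦ ((a + i).descFactorial b : K) * of (fun i j : Fin n ↦ ((b + j)! : K)⁻¹ *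
        of (fun i j : Fin n ↦ (descPochhammer K j).eval ((i : K) + (a - b : ℕ))) i j) i j := by
    ext i j
    simp only [of_apply, hentry, mul_assoc]
  rw [hfactor, det_mul_column, det_mul_row, det_descPochhammer_eval_natCast_add,
    Fin.prod_univ_eq_prod_range (fun i ↦ ((a + i).descFactorial b : K)),
    Fin.prod_univ_eq_prod_range (fun j ↦ ((b + j)! : K)⁻¹), ← prod_mul_distrib, ← prod_mul_distrib]
  exact prod_congr rfl fun i _ ↦ by ring

end Matrix

theorem stmt2_general (M : ℕ) :
    Matrix.det (Matrix.of fun i j : Fin M =>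
        (((3*M - ((i : ℕ) + 1)).choose (2*M - ((j : ℕ) + 1)) : ℚ)))
      = ∏ i ∈ Finset.range M,
          (((Nat.factorial i : ℚ) * (Nat.factorial (i + 2*M) : ℚ))
            / ((Nat.factorial (i + M) : ℚ))^2) ∧
    0 < Matrix.det (Matrix.of fun i j : Fin M =>
        (((3*M - ((i : ℕ) + 1)).choose (2*M - ((j : ℕ) + 1)) : ℚ))) := by
  have hreverse : (of fun i j : Fin M ↦ (((3*M - ((i : ℕ) + 1)).choose (2*M - ((j : ℕ) + 1)) : ℚ))).det
      = (of fun i j : Fin M ↦ (((2 * M + i).choose (M + j) : ℕ) : ℚ)).det := by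
    rw [← det_submatrix_equiv_self Fin.revPerm]
    congr 1
    ext i j
    simp only [submatrix_apply, of_apply, Fin.revPerm_apply, Fin.val_rev]
    congr 2 <;> omega
  have hdet : (of fun i j : Fin M ↦ (((3*M - ((i : ℕ) + 1)).choose (2*M - ((j : ℕ) + 1)) : ℚ))).det
      = ∏ i ∈ range M, ((i ! : ℚ) * (i + 2 * M)! / ((i + M)! : ℚ) ^ 2) := by
    rw [hreverse, det_choose_add_add (by omega : M ≤ 2 * M)]
    refine prod_congr rfl fun i _ ↦ ?_
    have hdesc : ((i + M)! * (2 * M + i).descFactorial M : ℚ) = (i + 2 * M)! := by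
      rw [show i + 2 * M = 2 * M + i by ring, show i + M = 2 * M + i - M by omega]
      exact_mod_cast Nat.factorial_mul_descFactorial (by omega)
    rw [← hdesc, add_comm M i]
    field_simp
  exact ⟨hdet, hdet ▸ by positivity⟩

theorem stmt2 (M : ℕ) (hM : 0 < M) :
    Matrix.det (Matrix.of fun i j : Fin M =>
        (((3*M - ((i : ℕ) + 1)).choose (2*M - ((j : ℕ) + 1)) : ℚ)))
      = ∏ i ∈ Finset.range M,
          (((Nat.factorial i : ℚ) * (Nat.factorial (i + 2*M) : ℚ))
            / ((Nat.factorial (i + M) : ℚ))^2) ∧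
    0 < Matrix.det (Matrix.of fun i j : Fin M =>
        (((3*M - ((i : ℕ) + 1)).choose (2*M - ((j : ℕ) + 1)) : ℚ))) :=
  stmt2_general M
end

section
/- For every positive integer M, the M×M matrix C'_M with entries C'_M(i,j) = binom(3M+1-i, 2M+1-j) for 1 ≤ i,j ≤ M has determinant det(C'_M) = ∏_{i=0}^{M} i!·(i+2M)! / ((M+i)!)^2, which is strictly positive. -/
/-!
Reversing the order of rows and columns turns `C'_M` into `(binom(2M+1+i, M+1+j))_{0 ≤ i,j < M}`.
Each entry factors as `(2M+1+i)!/(M+i)! · (M+i)^(j falling) / (M+1+j)!`, so up to diagonal factors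
the determinant is `det((M+i)^(j falling))`. The falling factorial `x^(j falling)` is a monic
polynomial of degree `j` in `x`, so this is the Vandermonde determinant of the nodes `M+i`, namely
`∏_{i<M} i!`. Regrouping the factorials gives the stated product, all of whose factors are positive.
-/

open Finset Matrix Nat

theorem Matrix.det_vandermonde_id_eq_prod_factorial {R : Type*} [CommRing R] (n : ℕ) :
    (vandermonde fun i : Fin n ↦ (i : R)).det = ∏ i ∈ range n, (i ! : R) := by
  cases n with
  | zero => simp
  | succ m =>
    rw [det_vandermonde_id_eq_superFactorial, ← prod_range_succ_factorial]
    push_cast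
    rfl

theorem Matrix.det_descFactorial_add {R : Type*} [CommRing R] [IsDomain R] (c n : ℕ) :
    (of fun i j : Fin n ↦ ((c + i).descFactorial j : R)).det = ∏ i ∈ range n, (i ! : R) := by
  have h := det_eval_matrixOfPolynomials_eq_det_vandermonde (fun i : Fin n ↦ ((c + i : ℕ) : R))
    (fun j ↦ descPochhammer R j) (fun j ↦ descPochhammer_natDegree R j)
    (fun j ↦ monic_descPochhammer R j)
  simp only [descPochhammer_eval_eq_descFactorial] at h
  rw [← h, ← det_vandermonde_id_eq_prod_factorial,
    ← det_vandermonde_add (fun i : Fin n ↦ (i : R)) c]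
  simp only [Nat.cast_add, add_comm]

theorem Nat.add_choose_add_mul_factorial (b N j : ℕ) :
    (b + N).choose (b + j) * (b + j)! * N ! = (b + N)! * N.descFactorial j := by
  rcases le_or_gt j N with hjN | hNj
  · have h := choose_mul_factorial_mul_factorial (n := b + N) (k := b + j) (by omega)
    rw [show b + N - (b + j) = N - j by omega] at h
    apply Nat.eq_of_mul_eq_mul_right (factorial_pos (N - j))
    calc _ = (b + N).choose (b + j) * (b + j)! * (N - j)! * N ! := by ring
      _ = (b + N)! * ((N - j)! * N.descFactorial j) := by rw [h, factorial_mul_descFactorial hjN]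
      _ = _ := by ring
  · rw [choose_eq_zero_of_lt (by omega), (descFactorial_eq_zero_iff_lt).2 hNj]
    simp

theorem Matrix.det_add_choose_add {K : Type*} [Field K] [CharZero K] (b c n : ℕ) :
    (of fun i j : Fin n ↦ ((b + (c + i)).choose (b + j) : K)).det =
      ∏ i ∈ range n, ((b + (c + i))! * i ! / ((c + i)! * (b + i)!) : K) := by
  have hfactor : (of fun i j : Fin n ↦ ((b + (c + i)).choose (b + j) : K)) =
      diagonal (fun i : Fin n ↦ ((b + (c + i))! / (c + i)! : K)) *
        of (fun i j : Fin n ↦ ((c + i).descFactorial j : K)) *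
          diagonal (fun j : Fin n ↦ ((b + j)! : K)⁻¹) := by
    ext i j
    have h : ((b + (c + i)).choose (b + j) * (b + j)! * (c + i)! : K) =
        (b + (c + i))! * (c + i).descFactorial j := by
      exact_mod_cast add_choose_add_mul_factorial b (c + i) j
    have := (c + (i : ℕ)).factorial_ne_zero
    have := (b + (j : ℕ)).factorial_ne_zero
    simp only [of_apply, diagonal_mul, mul_diagonal]
    field_simp
    linear_combination h
  rw [hfactor, det_mul, det_mul, det_diagonal, det_diagonal, det_descFactorial_add,
    ← Fin.prod_univ_eq_prod_range, ← Fin.prod_univ_eq_prod_range, ← prod_mul_distrib,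
    ← prod_mul_distrib]
  refine prod_congr rfl fun i _ ↦ ?_
  have := (c + (i : ℕ)).factorial_ne_zero
  have := (b + (i : ℕ)).factorial_ne_zero
  field_simp

theorem prod_range_succ_factorial_mul_div_sq {K : Type*} [Field K] [CharZero K] (M : ℕ) :
    ∏ i ∈ range (M + 1), ((i ! : K) * (i + 2 * M)! / ((M + i)! : K) ^ 2) =
      ∏ i ∈ range M, ((M + 1 + (M + i))! * i ! / ((M + i)! * (M + 1 + i)!) : K) := by
  have hA : ∏ i ∈ range (M + 1), (i ! : K) = (∏ i ∈ range M, (i ! : K)) * M ! :=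
    prod_range_succ _ _
  have hB : ∏ i ∈ range (M + 1), ((i + 2 * M)! : K) =
      (∏ i ∈ range M, ((M + 1 + (M + i))! : K)) * (2 * M)! := by
    rw [prod_range_succ', zero_add]
    congr! 4 with i
    omega
  have hC : ∏ i ∈ range (M + 1), ((M + i)! : K) = (∏ i ∈ range M, ((M + i)! : K)) * (2 * M)! := by
    rw [prod_range_succ, two_mul]
  have hC' : ∏ i ∈ range (M + 1), ((M + i)! : K) =
      (∏ i ∈ range M, ((M + 1 + i)! : K)) * M ! := by
    rw [prod_range_succ', add_zero]
    congr! 4 with i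
    omega
  have := M.factorial_ne_zero
  have := (2 * M).factorial_ne_zero
  calc _ = (∏ i ∈ range (M + 1), (i ! : K)) * (∏ i ∈ range (M + 1), ((i + 2 * M)! : K)) /
        ((∏ i ∈ range (M + 1), ((M + i)! : K)) * ∏ i ∈ range (M + 1), ((M + i)! : K)) := by
        simp only [sq, prod_div_distrib, prod_mul_distrib]
    _ = _ := by
        rw [hA, hB]
        nth_rw 1 [hC]
        rw [hC', prod_div_distrib, prod_mul_distrib, prod_mul_distrib]
        field_simp

theorem stmt3_general (M : ℕ) :
    Matrix.det (Matrix.of fun i j : Fin M =>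
        (((3*M + 1 - ((i : ℕ) + 1)).choose (2*M + 1 - ((j : ℕ) + 1)) : ℚ)))
      = ∏ i ∈ Finset.range (M + 1),
          (((Nat.factorial i : ℚ) * (Nat.factorial (i + 2*M) : ℚ))
            / ((Nat.factorial (M + i) : ℚ))^2) ∧
    0 < Matrix.det (Matrix.of fun i j : Fin M =>
        (((3*M + 1 - ((i : ℕ) + 1)).choose (2*M + 1 - ((j : ℕ) + 1)) : ℚ))) := by
  have hrev : (of fun i j : Fin M ↦
        ((3 * M + 1 - ((i : ℕ) + 1)).choose (2 * M + 1 - ((j : ℕ) + 1)) : ℚ)).det =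
      (of fun i j : Fin M ↦ ((M + 1 + (M + i)).choose (M + 1 + j) : ℚ)).det := by
    rw [← det_submatrix_equiv_self Fin.revPerm]
    congr 1
    ext i j
    simp only [submatrix_apply, of_apply, Fin.revPerm_apply, Fin.val_rev]
    congr 2 <;> omega
  have hdet := hrev.trans ((det_add_choose_add (M + 1) M M).trans
    (prod_range_succ_factorial_mul_div_sq M).symm)
  exact ⟨hdet, hdet ▸ prod_pos fun i _ ↦ by positivity⟩

theorem stmt3 (M : ℕ) (hM : 0 < M) :
    Matrix.det (Matrix.of fun i j : Fin M =>
        (((3*M + 1 - ((i : ℕ) + 1)).choose (2*M + 1 - ((j : ℕ) + 1)) : ℚ)))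
      = ∏ i ∈ Finset.range (M + 1),
          (((Nat.factorial i : ℚ) * (Nat.factorial (i + 2*M) : ℚ))
            / ((Nat.factorial (M + i) : ℚ))^2) ∧
    0 < Matrix.det (Matrix.of fun i j : Fin M =>
        (((3*M + 1 - ((i : ℕ) + 1)).choose (2*M + 1 - ((j : ℕ) + 1)) : ℚ))) :=
  stmt3_general M
end

section
/- Define P_n(X,Y) = ∑_{j=0}^{n} (-1)^j · binom(n+j, j) · binom(3n+1, n-j) · X^{2n+1+j} · Y^{n-j}. Then for every natural number n, P_n(X,Y) = X^{n+1} · ∑_{a+b=n} binom(n+a, a)·(XY)^a · binom(n+b, b)·(X(Y-X))^b, as polynomials in X and Y. -/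
/-!
Expanding `(Y - X)^b` binomially, the coefficient of `(-1)^k X^(2n+1+k) Y^(n-k)` on the right is
`∑_{a+b=n} C(n+a,a) C(n+b,b) C(b,k)`. Since `C(n+b,b) C(b,k) = C(n+k,k) C(n+b,b-k)`, this is
`C(n+k,k)` times a Chu–Vandermonde sum with negative upper indices,
`∑_{i+j=m} C(r+i,i) C(s+j,j) = C(r+s+1+m,m)` (the coefficient of `x^m` in
`(1-x)^-(r+1) (1-x)^-(s+1) = (1-x)^-(r+s+2)`), which evaluates to `C(3n+1,n-k)`.
-/

/-- The polynomial `P_n(X,Y) = ∑_{j=0}^{n} (-1)^j C(n+j,j) C(3n+1,n-j) X^{2n+1+j} Y^{n-j}`. -/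
def nielsenP {R : Type*} [CommRing R] (n : ℕ) (X Y : R) : R :=
  ∑ j ∈ Finset.range (n + 1),
    (-1) ^ j * (Nat.choose (n + j) j : R) * (Nat.choose (3 * n + 1) (n - j) : R)
      * X ^ (2 * n + 1 + j) * Y ^ (n - j)

open Finset PowerSeries

namespace Nat

theorem sum_antidiagonal_add_choose_mul_add_choose (r s m : ℕ) :
    ∑ p ∈ antidiagonal m, (r + p.1).choose p.1 * (s + p.2).choose p.2
      = (r + s + 1 + m).choose m := by
  have h : (invOneSubPow ℤ (r + s + 1 + 1)).val
      = (invOneSubPow ℤ (r + 1)).val * (invOneSubPow ℤ (s + 1)).val := by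
    rw [← Units.val_mul, ← invOneSubPow_add]
    congr 2
    omega
  have hcoeff := congrArg (coeff m) h
  simp only [coeff_mul, invOneSubPow_val_succ_eq_mk_add_choose, coeff_mk] at hcoeff
  rw [← choose_symm_add (a := r + s + 1)]
  simp only [← choose_symm_add]
  exact_mod_cast hcoeff.symm

theorem add_add_choose_mul_choose (n i k : ℕ) :
    (n + (i + k)).choose (i + k) * (i + k).choose k
      = (n + k).choose k * (n + k + i).choose i := by
  have h := choose_mul (n := n + k + i) (k := k + i) (s := i) (by omega)
  rw [Nat.add_sub_cancel, Nat.add_sub_cancel, ← choose_symm_add (a := k)] at h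
  rw [add_comm i k, ← add_assoc, h, mul_comm]

theorem sum_antidiagonal_add_choose_mul_add_choose_mul_choose {n k : ℕ} (hk : k ≤ n) :
    ∑ p ∈ antidiagonal n, (n + p.1).choose p.1 * ((n + p.2).choose p.2 * p.2.choose k)
      = (n + k).choose k * (3 * n + 1).choose (n - k) := by
  rw [← sum_filter_of_ne (p := fun p => k ≤ p.2) fun p _ hp => by_contra fun hlt =>
      hp (by rw [choose_eq_zero_of_lt (not_le.mp hlt), mul_zero, mul_zero]),
    Finset.Nat.antidiagonal_filter_le_snd_of_le hk, sum_map]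
  simp only [Function.Embedding.coe_prodMap, Function.Embedding.coeFn_mk,
    Function.Embedding.refl_apply, Prod.map_fst, Prod.map_snd, add_add_choose_mul_choose,
    mul_left_comm _ ((n + k).choose k), ← mul_sum, sum_antidiagonal_add_choose_mul_add_choose]
  rw [show n + (n + k) + 1 + (n - k) = 3 * n + 1 by omega]

end Nat

section CommRing

variable {R : Type*} [CommRing R]

theorem mul_pow_mul_mul_sub_pow_eq_sum (X Y : R) (a b : ℕ) :
    (X * Y) ^ a * (X * (Y - X)) ^ b
      = ∑ k ∈ range (a + b + 1),
          (b.choose k : R) * ((-1) ^ k * X ^ (a + b + k) * Y ^ (a + b - k)) := by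
  rw [← sum_subset (range_subset_range.mpr (by omega : b + 1 ≤ a + b + 1)) fun k _ hk => by
      rw [Nat.choose_eq_zero_of_lt (by simpa using hk), Nat.cast_zero, zero_mul],
    mul_pow X Y, mul_pow X, sub_eq_neg_add, add_pow, mul_sum, mul_sum]
  refine sum_congr rfl fun k hk => ?_
  obtain ⟨c, rfl⟩ := Nat.exists_eq_add_of_le (mem_range_succ_iff.mp hk)
  rw [show a + (k + c) - k = a + c by omega, Nat.add_sub_cancel_left, neg_pow]
  ring

theorem nielsenP_eq_sum_antidiagonal (n : ℕ) (X Y : R) :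
    nielsenP n X Y = ∑ p ∈ antidiagonal n, ∑ k ∈ range (n + 1),
      (((n + p.1).choose p.1 * ((n + p.2).choose p.2 * p.2.choose k) : ℕ) : R)
        * ((-1) ^ k * X ^ (2 * n + 1 + k) * Y ^ (n - k)) := by
  rw [sum_comm, nielsenP]
  refine sum_congr rfl fun k hk => ?_
  rw [← sum_mul, ← Nat.cast_sum,
    Nat.sum_antidiagonal_add_choose_mul_add_choose_mul_choose (mem_range_succ_iff.mp hk)]
  push_cast
  ring

end CommRing

theorem stmt10 {R : Type*} [CommRing R] (n : ℕ) (X Y : R) :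
    nielsenP n X Y
      = X ^ (n + 1) *
        ∑ p ∈ Finset.HasAntidiagonal.antidiagonal n,
          (Nat.choose (n + p.1) p.1 : R) * (X * Y) ^ p.1 *
            ((Nat.choose (n + p.2) p.2 : R) * (X * (Y - X)) ^ p.2) := by
  rw [nielsenP_eq_sum_antidiagonal, mul_sum]
  refine sum_congr rfl fun p hp => ?_
  calc _ = ((n + p.1).choose p.1 * (n + p.2).choose p.2 : R) * X ^ (n + 1)
          * ((X * Y) ^ p.1 * (X * (Y - X)) ^ p.2) := by
        rw [mul_pow_mul_mul_sub_pow_eq_sum, mem_antidiagonal.mp hp, mul_sum]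
        refine sum_congr rfl fun k _ => ?_
        push_cast
        ring
    _ = _ := by ring
end

section
/- Define P_n(X,Y) = ∑_{j=0}^{n} (-1)^j · binom(n+j, j) · binom(3n+1, n-j) · X^{2n+1+j} · Y^{n-j}. Then for every natural number n ≥ 0, P_n(X,Y) - P_n(Y,X) + P_n(Y-X,-X) = 0 as polynomials in X and Y. -/
open Finset

namespace Polynomial

variable {R : Type*} [CommRing R]

lemma coeff_C_add_C_mul_X_pow (a b : R) (m k : ℕ) :
    ((C a + C b * X) ^ m).coeff k = (m.choose k : R) * a ^ (m - k) * b ^ k := by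
  rw [add_comm, add_pow, finsetSum_coeff]
  simp_rw [mul_pow, ← C_pow, mul_assoc, mul_comm (X ^ _), ← mul_assoc, ← C_eq_natCast, ← C_mul,
    coeff_C_mul_X_pow]
  rw [sum_ite_eq]
  split_ifs with h
  · ring
  · rw [Nat.choose_eq_zero_of_lt (by simpa using h)]; simp

lemma reflect_C_add_C_mul_X_pow (a b : R) (m : ℕ) :
    reflect m ((C a + C b * X) ^ m) = (C b + C a * X) ^ m := by
  ext k
  rw [coeff_reflect, coeff_C_add_C_mul_X_pow, coeff_C_add_C_mul_X_pow]
  rcases le_or_gt k m with h | h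
  · rw [revAt_le h, Nat.choose_symm h, Nat.sub_sub_self h]; ring
  · rw [revAt_eq_self_of_lt h, Nat.choose_eq_zero_of_lt h]; simp

lemma C_add_C_mul_X_pow_comp (a b : R) (m : ℕ) :
    ((C a + C b * X) ^ m).comp (-(1 + X)) = (C (a - b) + C (-b) * X) ^ m := by
  simp only [pow_comp, add_comp, mul_comp, C_comp, X_comp, map_sub, map_neg]
  ring

lemma neg_one_add_X_pow (k : ℕ) : (-(1 + X) : R[X]) ^ k = C ((-1) ^ k) * (1 + X) ^ k := by
  rw [neg_pow, map_pow, map_neg, map_one]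

lemma exists_eq_X_pow_mul_add_one_add_X_pow_mul (n : ℕ) {N : R[X]}
    (hN : N.natDegree ≤ 3 * n + 1) :
    ∃ U V : R[X], N = X ^ (n + 1) * U + (1 + X) ^ (n + 1) * V ∧
      U.natDegree ≤ 2 * n ∧ V.natDegree ≤ n := by
  nontriviality R
  obtain ⟨a, b, hab⟩ := (show IsCoprime (X : R[X]) (1 + X) from ⟨-1, 1, by ring⟩).pow
    (m := n + 1) (n := n + 1)
  have hdiv := modByMonic_add_div (b * N) (X ^ (n + 1))
  obtain ⟨U, hU⟩ : ∃ U, U = a * N + (b * N /ₘ X ^ (n + 1)) * (1 + X) ^ (n + 1) := ⟨_, rfl⟩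
  obtain ⟨V, hV⟩ : ∃ V, V = b * N %ₘ X ^ (n + 1) := ⟨_, rfl⟩
  have hNUV : N = X ^ (n + 1) * U + (1 + X) ^ (n + 1) * V := by
    rw [hU, hV]
    linear_combination (-N) * hab - (1 + X) ^ (n + 1) * hdiv
  have hVdeg : V.natDegree ≤ n := Nat.lt_succ_iff.mp <| by
    simpa [hV] using natDegree_modByMonic_lt (b * N) (monic_X_pow (n + 1))
      (fun h => by simpa using congrArg natDegree h)
  refine ⟨U, V, hNUV, ?_, hVdeg⟩
  have hXU : (X ^ (n + 1) * U).natDegree ≤ 3 * n + 1 := by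
    rw [eq_sub_of_add_eq hNUV.symm]
    refine (natDegree_sub_le _ _).trans (max_le hN (natDegree_mul_le.trans ?_))
    have : ((1 + X) ^ (n + 1) : R[X]).natDegree ≤ n + 1 := by compute_degree
    omega
  by_cases hU0 : U = 0
  · simp [hU0]
  · rw [natDegree_X_pow_mul _ hU0] at hXU; omega

end Polynomial

open Polynomial

section Residue

variable {R : Type*} [CommRing R]

noncomputable def invOneAddXPow (n : ℕ) : PowerSeries R :=
  PowerSeries.rescale (-1) (PowerSeries.invOneSubPow R (n + 1)).val

lemma coe_one_add_X_pow_mul_invOneAddXPow (n : ℕ) :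
    (((1 + X) ^ (n + 1) : R[X]) : PowerSeries R) * invOneAddXPow n = 1 := by
  have h : (((1 + X) ^ (n + 1) : R[X]) : PowerSeries R)
      = PowerSeries.rescale (-1) ((1 - PowerSeries.X) ^ (n + 1)) := by
    simp [PowerSeries.rescale_X, sub_eq_add_neg]
  rw [h, invOneAddXPow, ← map_mul, ← PowerSeries.invOneSubPow_inv_eq_one_sub_pow,
    Units.inv_val, map_one]

lemma coeff_invOneAddXPow (n j : ℕ) :
    PowerSeries.coeff j (invOneAddXPow n : PowerSeries R) = (-1) ^ j * ((n + j).choose j : R) := by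
  rw [invOneAddXPow, PowerSeries.coeff_rescale, PowerSeries.invOneSubPow_val_succ_eq_mk_add_choose,
    PowerSeries.coeff_mk, Nat.choose_symm_add]

/-- `f ↦ [u^n] f(u) / (1 + u)^(n+1)`, the residue at `0` of `f(u) du / (u (1 + u))^(n+1)`. -/
noncomputable def resZero (n : ℕ) : R[X] →ₗ[R] R :=
  PowerSeries.coeff n ∘ₗ LinearMap.mulRight R (invOneAddXPow n) ∘ₗ
    (coeToPowerSeries.algHom R).toLinearMap

lemma resZero_apply (n : ℕ) (f : R[X]) :
    resZero n f = PowerSeries.coeff n ((f : PowerSeries R) * invOneAddXPow n) := rfl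

lemma resZero_eq_sum (n : ℕ) (f : R[X]) :
    resZero n f = ∑ j ∈ range (n + 1), (-1) ^ j * ((n + j).choose j : R) * f.coeff (n - j) := by
  rw [resZero_apply, PowerSeries.coeff_mul, ← Finset.Nat.sum_antidiagonal_swap]
  simp only [Prod.fst_swap, Prod.snd_swap]
  rw [Finset.Nat.sum_antidiagonal_eq_sum_range_succ
    (fun i j => PowerSeries.coeff j (f : PowerSeries R) * PowerSeries.coeff i (invOneAddXPow n))]
  refine sum_congr rfl fun j _ => ?_
  rw [coeff_coe, coeff_invOneAddXPow, mul_comm]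

lemma resZero_C_add_C_mul_X_pow (n : ℕ) (a b : R) :
    resZero n ((C a + C b * X) ^ (3 * n + 1)) = nielsenP n a b := by
  rw [resZero_eq_sum, nielsenP]
  refine sum_congr rfl fun j hj => ?_
  rw [coeff_C_add_C_mul_X_pow, show 3 * n + 1 - (n - j) = 2 * n + 1 + j by
    have := mem_range.mp hj; omega]
  ring

lemma resZero_X_pow_succ_mul (n : ℕ) (U : R[X]) : resZero n (X ^ (n + 1) * U) = 0 := by
  rw [resZero_eq_sum]
  refine sum_eq_zero fun j _ => ?_
  rw [coeff_X_pow_mul', if_neg (by omega), mul_zero]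

lemma resZero_one_add_X_pow_succ_mul (n : ℕ) (V : R[X]) :
    resZero n ((1 + X) ^ (n + 1) * V) = V.coeff n := by
  rw [resZero_apply, Polynomial.coe_mul, mul_right_comm, coe_one_add_X_pow_mul_invOneAddXPow,
    one_mul, coeff_coe]

lemma resZero_X_pow_mul_add_one_add_X_pow_mul (n : ℕ) (U V : R[X]) :
    resZero n (X ^ (n + 1) * U + (1 + X) ^ (n + 1) * V) = V.coeff n := by
  rw [map_add, resZero_X_pow_succ_mul, resZero_one_add_X_pow_succ_mul, zero_add]

lemma resZero_reflect_X_pow_mul_add_one_add_X_pow_mul (n : ℕ) {U V : R[X]}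
    (hU : U.natDegree ≤ 2 * n) (hV : V.natDegree ≤ 2 * n) :
    resZero n (reflect (3 * n + 1) (X ^ (n + 1) * U + (1 + X) ^ (n + 1) * V))
      = resZero n (reflect (2 * n) U) + V.coeff n := by
  have hX : reflect (n + 1) (X ^ (n + 1) : R[X]) = 1 := by
    rw [reflect_monomial, revAt_le le_rfl, Nat.sub_self, pow_zero]
  have hOneAddX : reflect (n + 1) ((1 + X) ^ (n + 1) : R[X]) = (1 + X) ^ (n + 1) := by
    simpa using reflect_C_add_C_mul_X_pow (1 : R) 1 (n + 1)
  have hdeg : ((1 + X) ^ (n + 1) : R[X]).natDegree ≤ n + 1 := by compute_degree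
  rw [show 3 * n + 1 = n + 1 + 2 * n by ring, reflect_add,
    reflect_mul _ _ (natDegree_X_pow_le (R := R) _) hU, reflect_mul _ _ hdeg hV, hX, hOneAddX,
    one_mul, map_add, resZero_one_add_X_pow_succ_mul, coeff_reflect, revAt_le (by omega),
    show 2 * n - n = n by omega]

lemma resZero_comp_X_pow_mul_add_one_add_X_pow_mul (n : ℕ) (U V : R[X]) :
    resZero n ((X ^ (n + 1) * U + (1 + X) ^ (n + 1) * V).comp (-(1 + X)))
      = (-1) ^ (n + 1) * (U.comp (-(1 + X))).coeff n := by
  have h : (X ^ (n + 1) * U + (1 + X) ^ (n + 1) * V).comp (-(1 + X))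
      = ((-1) ^ (n + 1) : R) • (X ^ (n + 1) * V.comp (-(1 + X))
        + (1 + X) ^ (n + 1) * U.comp (-(1 + X))) := by
    rw [add_comp, mul_comp, mul_comp, pow_comp, pow_comp, X_comp, add_comp, one_comp, X_comp,
      show (1 + -(1 + X) : R[X]) = -X by ring, neg_pow (X : R[X]), neg_one_add_X_pow,
      smul_eq_C_mul, map_pow, map_neg, map_one]
    ring
  rw [h, map_smul, resZero_X_pow_mul_add_one_add_X_pow_mul, smul_eq_mul]

/-- The residues of `U(u) du / (1 + u)^(n+1)` at `∞` and at `-1` cancel when `deg U ≤ 2n`. -/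
lemma resZero_reflect_eq_coeff_comp (n : ℕ) {U : R[X]} (hU : U.natDegree ≤ 2 * n) :
    resZero n (reflect (2 * n) U) = (-1) ^ n * (U.comp (-(1 + X))).coeff n := by
  rw [comp, eval₂_eq_sum_range' C (show U.natDegree < n + (n + 1) by omega), finsetSum_coeff,
    sum_range_add, sum_eq_zero (s := range n), zero_add, mul_sum, resZero_eq_sum]
  · refine sum_congr rfl fun j hj => ?_
    rw [neg_one_add_X_pow, ← mul_assoc, ← C_mul, coeff_C_mul, coeff_one_add_X_pow, coeff_reflect,
      revAt_le (by have := mem_range.mp hj; omega), show 2 * n - (n - j) = n + j by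
        have := mem_range.mp hj; omega, Nat.choose_symm_add, pow_add]
    have hsq : ((-1 : R) ^ n) * (-1) ^ n = 1 := by rw [← mul_pow]; norm_num
    linear_combination (-((n + j).choose j * U.coeff (n + j) * (-1) ^ j : R)) * hsq
  · intro k hk
    rw [neg_one_add_X_pow, coeff_C_mul, coeff_C_mul, coeff_one_add_X_pow,
      Nat.choose_eq_zero_of_lt (mem_range.mp hk), Nat.cast_zero, mul_zero, mul_zero]

end Residue

theorem stmt11 {R : Type*} [CommRing R] (n : ℕ) (X Y : R) :
    nielsenP n X Y - nielsenP n Y X + nielsenP n (Y - X) (-X) = 0 := by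
  obtain ⟨U, V, hN, hU, hV⟩ := exists_eq_X_pow_mul_add_one_add_X_pow_mul n
    (N := (C Y + C X * Polynomial.X) ^ (3 * n + 1)) (by compute_degree)
  have hZero : nielsenP n Y X = V.coeff n := by
    rw [← resZero_C_add_C_mul_X_pow, hN, resZero_X_pow_mul_add_one_add_X_pow_mul]
  have hInfty :
      nielsenP n X Y = (-1) ^ n * (U.comp (-(1 + Polynomial.X))).coeff n + V.coeff n := by
    rw [← resZero_C_add_C_mul_X_pow, ← reflect_C_add_C_mul_X_pow, hN,
      resZero_reflect_X_pow_mul_add_one_add_X_pow_mul n hU (by omega),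
      resZero_reflect_eq_coeff_comp n hU]
  have hNegOne :
      nielsenP n (Y - X) (-X) = (-1) ^ (n + 1) * (U.comp (-(1 + Polynomial.X))).coeff n := by
    rw [← resZero_C_add_C_mul_X_pow, ← C_add_C_mul_X_pow_comp, hN,
      resZero_comp_X_pow_mul_add_one_add_X_pow_mul]
  rw [hZero, hInfty, hNegOne]
  ring
end

section
/- For real x, y with |x| + |y| < 1, the dilogarithm Li_2 satisfies the five-term relation: Li_2(x) + Li_2(y) - Li_2(x/(1-y)) - Li_2(y/(1-x)) + Li_2(xy/((1-x)(1-y))) = -log(1-x)·log(1-y). -/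
/-- The dilogarithm `Li_2(x) = ∑_{k ≥ 1} x^k / k^2` for `|x| < 1`. -/
noncomputable def Li2 (x : ℝ) : ℝ :=
  ∑' k : ℕ, x ^ (k + 1) / ((k + 1 : ℕ) : ℝ) ^ 2

/-!
Fix `y` and let `t` run from `0` to `x`. Since `Li₂'(u) = -log(1 - u) / u`, the term `Li₂(g(t))`
has derivative `-log(1 - g) · g'/g`. The arguments `t/(1-y)`, `y/(1-t)`, `ty/((1-t)(1-y))` have
`1 - g` equal to `1 - t - y` divided by `1 - y`, `1 - t`, `(1-t)(1-y)` respectively, and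
logarithmic derivatives `1/t`, `1/(1-t)`, `1/t + 1/(1-t)`; so the derivative of the difference
of the two sides cancels identically. That difference vanishes at `t = 0`, and the point `t = 0`
itself, where the formula for `Li₂'` breaks down, is harmless since constancy only needs the
derivative to vanish off a countable set.
-/

open Real Set

theorem eq_of_hasDerivAt_zero_off_countable {E : Type*} [NormedAddCommGroup E] [NormedSpace ℝ E]
    [CompleteSpace E] {f : ℝ → E} {a b : ℝ} {s : Set ℝ} (hs : s.Countable)
    (hc : ContinuousOn f (uIcc a b))
    (hd : ∀ x ∈ Ioo (min a b) (max a b) \ s, HasDerivAt f 0 x) : f b = f a := by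
  have := MeasureTheory.integral_eq_of_hasDerivAt_off_countable f 0 hs hc hd
    intervalIntegrable_const
  simpa [sub_eq_zero, eq_comm] using this

theorem Li2_zero : Li2 0 = 0 := by simp [Li2]

theorem hasDerivAt_Li2 {t : ℝ} (ht : |t| < 1) :
    HasDerivAt Li2 (∑' k : ℕ, t ^ k / ((k + 1 : ℕ) : ℝ)) t := by
  obtain ⟨r, htr, hr1⟩ := exists_between ht
  have hr0 : 0 ≤ r := (abs_nonneg t).trans htr.le
  refine hasDerivAt_tsum_of_isPreconnected (summable_geometric_of_lt_one hr0 hr1)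
    (g := fun k z => z ^ (k + 1) / ((k + 1 : ℕ) : ℝ) ^ 2)
    (g' := fun k z => z ^ k / ((k + 1 : ℕ) : ℝ))
    Metric.isOpen_ball (convex_ball 0 r).isPreconnected (fun k z _ => ?_) (fun k z hz => ?_)
    (Metric.mem_ball_self ((abs_nonneg t).trans_lt htr)) ?_ (by simpa using htr)
  · refine ((hasDerivAt_pow (k + 1) z).div_const _).congr_deriv ?_
    push_cast
    field_simp
  · have hz : |z| < r := by simpa using hz
    have hk : (1 : ℝ) ≤ ((k + 1 : ℕ) : ℝ) := by simp
    calc ‖z ^ k / ((k + 1 : ℕ) : ℝ)‖ ≤ |z| ^ k := by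
          rw [norm_div, norm_pow, Real.norm_eq_abs, Real.norm_natCast]
          exact div_le_self (by positivity) hk
      _ ≤ r ^ k := pow_le_pow_left₀ (abs_nonneg z) hz.le k
  · simp

theorem continuousAt_Li2 {t : ℝ} (ht : |t| < 1) : ContinuousAt Li2 t :=
  (hasDerivAt_Li2 ht).continuousAt

theorem hasDerivAt_Li2_of_ne_zero {t : ℝ} (ht : |t| < 1) (h0 : t ≠ 0) :
    HasDerivAt Li2 (-log (1 - t) / t) t := by
  have hsum : HasSum (fun k : ℕ => t ^ k / ((k + 1 : ℕ) : ℝ)) (-log (1 - t) / t) := by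
    refine (hasSum_pow_div_log_of_abs_lt_one ht).div_const t |>.congr_fun fun k => ?_
    push_cast
    field_simp
    ring
  exact hsum.tsum_eq ▸ hasDerivAt_Li2 ht

theorem HasDerivAt.Li2 {g : ℝ → ℝ} {g' t : ℝ} (hg : HasDerivAt g g' t) (h1 : |g t| < 1)
    (h0 : g t ≠ 0) : HasDerivAt (fun s => Li2 (g s)) (-Real.log (1 - g t) * (g' / g t)) t :=
  ((hasDerivAt_Li2_of_ne_zero h1 h0).comp t hg).congr_deriv (by ring)

theorem abs_div_one_sub_lt_one {a b : ℝ} (h : |a| + |b| < 1) : |a / (1 - b)| < 1 := by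
  have hb : 0 < 1 - b := by linarith [le_abs_self b, abs_nonneg a]
  rw [abs_div, abs_of_pos hb, div_lt_one hb]
  linarith [le_abs_self b]

theorem abs_mul_div_one_sub_mul_one_sub_lt_one {a b : ℝ} (h : |a| + |b| < 1) :
    |a * b / ((1 - a) * (1 - b))| < 1 := by
  have ha : 1 - |a| ≤ 1 - a := by linarith [le_abs_self a]
  have hb : 1 - |b| ≤ 1 - b := by linarith [le_abs_self b]
  have hab : 0 < (1 - a) * (1 - b) :=
    mul_pos (by linarith [abs_nonneg b]) (by linarith [abs_nonneg a])
  rw [abs_div, abs_of_pos hab, div_lt_one hab, abs_mul]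
  nlinarith [mul_le_mul ha hb (by linarith [abs_nonneg a]) (by linarith [abs_nonneg b]),
    mul_nonneg (abs_nonneg a) (abs_nonneg b)]

noncomputable def fiveTermDefect (y t : ℝ) : ℝ :=
  Li2 t + Li2 y - Li2 (t / (1 - y)) - Li2 (y / (1 - t)) + Li2 (t * y / ((1 - t) * (1 - y)))
    + log (1 - t) * log (1 - y)

theorem fiveTermDefect_zero (y : ℝ) : fiveTermDefect y 0 = 0 := by
  simp [fiveTermDefect, Li2_zero]

theorem continuousAt_fiveTermDefect {y t : ℝ} (h : |t| + |y| < 1) :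
    ContinuousAt (fiveTermDefect y) t := by
  have ht : 1 - t ≠ 0 := by linarith [le_abs_self t, abs_nonneg y]
  have hy : 1 - y ≠ 0 := by linarith [le_abs_self y, abs_nonneg t]
  have hLi2 {g : ℝ → ℝ} (hg : ContinuousAt g t) (h1 : |g t| < 1) :
      ContinuousAt (fun s => Li2 (g s)) t :=
    (continuousAt_Li2 h1).comp hg
  refine ((((continuousAt_Li2 (by linarith [abs_nonneg y])).add continuousAt_const).sub
    (hLi2 ?_ (abs_div_one_sub_lt_one h))).sub (hLi2 ?_ (abs_div_one_sub_lt_one (by linarith)))).add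
    (hLi2 ?_ (abs_mul_div_one_sub_mul_one_sub_lt_one h)) |>.add ?_
  all_goals fun_prop (disch := first | assumption | exact mul_ne_zero ht hy)

theorem hasDerivAt_fiveTermDefect {y t : ℝ} (h : |t| + |y| < 1) (ht0 : t ≠ 0) (hy0 : y ≠ 0) :
    HasDerivAt (fiveTermDefect y) 0 t := by
  have ht : 0 < 1 - t := by linarith [le_abs_self t, abs_nonneg y]
  have hy : 0 < 1 - y := by linarith [le_abs_self y, abs_nonneg t]
  have hty : 0 < 1 - t - y := by linarith [le_abs_self t, le_abs_self y]
  have hA := hasDerivAt_Li2_of_ne_zero (by linarith [abs_nonneg y]) ht0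
  have hB := ((hasDerivAt_id' t).div_const (1 - y)).Li2 (abs_div_one_sub_lt_one h)
    (div_ne_zero ht0 hy.ne')
  have hC := ((hasDerivAt_const t y).div ((hasDerivAt_id' t).const_sub 1) ht.ne').Li2
    (abs_div_one_sub_lt_one (by linarith)) (div_ne_zero hy0 ht.ne')
  have hD := (((hasDerivAt_id' t).mul_const y).div
    (((hasDerivAt_id' t).const_sub 1).mul_const (1 - y)) (mul_pos ht hy).ne').Li2
    (abs_mul_div_one_sub_mul_one_sub_lt_one h)
    (div_ne_zero (mul_ne_zero ht0 hy0) (mul_pos ht hy).ne')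
  have hL := (((hasDerivAt_id' t).const_sub 1).log ht.ne').mul_const (log (1 - y))
  refine ((((hA.add_const (Li2 y)).sub hB).sub hC).add hD).add hL |>.congr_deriv ?_
  have hlogB : log (1 - t / (1 - y)) = log (1 - t - y) - log (1 - y) := by
    rw [← log_div hty.ne' hy.ne']; congr 1; field_simp; ring
  have hlogC : log (1 - y / (1 - t)) = log (1 - t - y) - log (1 - t) := by
    rw [← log_div hty.ne' ht.ne']; congr 1; field_simp
  have hlogD : log (1 - t * y / ((1 - t) * (1 - y)))
      = log (1 - t - y) - log (1 - t) - log (1 - y) := by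
    rw [sub_sub, ← log_mul ht.ne' hy.ne', ← log_div hty.ne' (mul_pos ht hy).ne']
    congr 1; field_simp; ring
  simp only [Pi.div_apply]
  rw [hlogB, hlogC, hlogD]
  field_simp
  ring

theorem stmt15 (x y : ℝ) (h : |x| + |y| < 1) :
    Li2 x + Li2 y - Li2 (x / (1 - y)) - Li2 (y / (1 - x))
      + Li2 (x * y / ((1 - x) * (1 - y)))
      = -(Real.log (1 - x) * Real.log (1 - y)) := by
  rcases eq_or_ne y 0 with rfl | hy0
  · simp [Li2_zero]
  have hseg : ∀ t ∈ uIcc 0 x, |t| + |y| < 1 := fun t ht =>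
    lt_of_le_of_lt (by simpa using add_le_add_right (abs_sub_left_of_mem_uIcc ht) |y|) h
  have hdefect : fiveTermDefect y x = fiveTermDefect y 0 :=
    eq_of_hasDerivAt_zero_off_countable (countable_singleton 0)
      (fun t ht => (continuousAt_fiveTermDefect (hseg t ht)).continuousWithinAt)
      (fun t ht => hasDerivAt_fiveTermDefect (hseg t (Ioo_subset_Icc_self ht.1)) ht.2 hy0)
  rw [fiveTermDefect_zero, fiveTermDefect] at hdefect
  linarith
end

section
/- Let ω be a real root of u^3 + u^2 - 1. Then 1 + ω^4 = ω^{-1} and 1 - ω^5 = ω; moreover the three roots of x^2(1-x)^{-3} = t^2(1-t)^2/(1-t+t^2)^3 specialized at t = -ω are -ω^{-1}, ω^5, and -ω^{-4}. -/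
/-!
From `ω²(1 + ω) = 1` one gets `1 + ω = ω⁻²`, `1 + ω⁻¹ = ω⁻³`, `1 - ω⁵ = ω` and
`1 + ω⁻⁴ = ω⁻⁵`. With these, `t²(1 - t)²/(1 - t + t²)³` at `t = -ω` and `x²/(1 - x)³` at each
of the three points all collapse to the same power `ω⁷`.
-/

section CubicRoot

variable {K : Type*} [Field K] {ω : K}

theorem ne_zero_of_cube_add_sq_sub_one_eq_zero (hω : ω ^ 3 + ω ^ 2 - 1 = 0) : ω ≠ 0 := by
  rintro rfl
  norm_num at hω

theorem one_add_eq_inv_sq (hω : ω ^ 3 + ω ^ 2 - 1 = 0) : 1 + ω = (ω ^ 2)⁻¹ :=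
  eq_inv_of_mul_eq_one_left (by linear_combination hω)

theorem one_sub_pow_five_eq_self (hω : ω ^ 3 + ω ^ 2 - 1 = 0) : 1 - ω ^ 5 = ω := by
  linear_combination (-ω ^ 2 + ω - 1) * hω

theorem one_add_pow_four_eq_inv (hω : ω ^ 3 + ω ^ 2 - 1 = 0) : 1 + ω ^ 4 = ω⁻¹ :=
  eq_inv_of_mul_eq_one_left (by linear_combination -one_sub_pow_five_eq_self hω)

theorem one_add_inv_eq_inv_pow_three (hω : ω ^ 3 + ω ^ 2 - 1 = 0) : 1 + ω⁻¹ = (ω ^ 3)⁻¹ := by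
  have h0 := ne_zero_of_cube_add_sq_sub_one_eq_zero hω
  field_simp
  linear_combination hω

theorem one_add_inv_pow_four_eq_inv_pow_five (hω : ω ^ 3 + ω ^ 2 - 1 = 0) :
    1 + (ω ^ 4)⁻¹ = (ω ^ 5)⁻¹ := by
  have h0 := ne_zero_of_cube_add_sq_sub_one_eq_zero hω
  field_simp
  linear_combination -one_sub_pow_five_eq_self hω

theorem sq_mul_sq_div_cube_at_neg_eq_pow_seven (hω : ω ^ 3 + ω ^ 2 - 1 = 0) :
    (-ω) ^ 2 * (1 - -ω) ^ 2 / (1 - -ω + (-ω) ^ 2) ^ 3 = ω ^ 7 := by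
  have h0 := ne_zero_of_cube_add_sq_sub_one_eq_zero hω
  have hden : 1 - -ω + (-ω) ^ 2 = (ω ^ 3)⁻¹ := by
    field_simp
    linear_combination (1 + ω ^ 2) * hω
  rw [hden, sub_neg_eq_add, one_add_eq_inv_sq hω]
  field_simp

theorem sq_div_one_sub_cube_neg_inv_eq_pow_seven (hω : ω ^ 3 + ω ^ 2 - 1 = 0) :
    (-ω⁻¹) ^ 2 / (1 - -ω⁻¹) ^ 3 = ω ^ 7 := by
  have h0 := ne_zero_of_cube_add_sq_sub_one_eq_zero hω
  rw [sub_neg_eq_add, one_add_inv_eq_inv_pow_three hω]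
  field_simp

theorem sq_div_one_sub_cube_pow_five_eq_pow_seven (hω : ω ^ 3 + ω ^ 2 - 1 = 0) :
    (ω ^ 5) ^ 2 / (1 - ω ^ 5) ^ 3 = ω ^ 7 := by
  have h0 := ne_zero_of_cube_add_sq_sub_one_eq_zero hω
  rw [one_sub_pow_five_eq_self hω]
  field_simp

theorem sq_div_one_sub_cube_neg_inv_pow_four_eq_pow_seven (hω : ω ^ 3 + ω ^ 2 - 1 = 0) :
    (-(ω ^ 4)⁻¹) ^ 2 / (1 - -(ω ^ 4)⁻¹) ^ 3 = ω ^ 7 := by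
  have h0 := ne_zero_of_cube_add_sq_sub_one_eq_zero hω
  rw [sub_neg_eq_add, one_add_inv_pow_four_eq_inv_pow_five hω]
  field_simp

end CubicRoot

theorem stmt19 (ω : ℝ) (hω : ω ^ 3 + ω ^ 2 - 1 = 0) :
    1 + ω ^ 4 = ω⁻¹ ∧ 1 - ω ^ 5 = ω ∧
    ∀ x ∈ ({-ω⁻¹, ω ^ 5, -(ω ^ 4)⁻¹} : Set ℝ),
      x ^ 2 / (1 - x) ^ 3
        = (-ω) ^ 2 * (1 - -ω) ^ 2 / (1 - -ω + (-ω) ^ 2) ^ 3 := by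
  refine ⟨one_add_pow_four_eq_inv hω, one_sub_pow_five_eq_self hω, ?_⟩
  rw [sq_mul_sq_div_cube_at_neg_eq_pow_seven hω]
  rintro x (rfl | rfl | rfl)
  · exact sq_div_one_sub_cube_neg_inv_eq_pow_seven hω
  · exact sq_div_one_sub_cube_pow_five_eq_pow_seven hω
  · exact sq_div_one_sub_cube_neg_inv_pow_four_eq_pow_seven hω
end
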